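/- arXiv:2008.10262 — 2 statements merged into one kernel-verified Lean document; each statement's English description precedes it below -/
import Mathlib

section
/- Let a ∈ ℝ, let K : (a,∞) → ℝ be positive and integrable on (a,∞), and let f, g : [a,∞) → ℝ be continuous, bounded and nonnegative. If f(t) ≤ g(t) + ∫_t^∞ K(s) f(s) ds for all t ≥ a, then f(t) ≤ g(t) + ∫_t^∞ K(s) exp(∫_t^s K(u) du) g(s) ds for all t ≥ a. -/
/-!
With `R t = ∫ s in Ioi t, K s * f s` and `P t = ∫ s in a..t, K s`, the hypothesis says
`-R' = K f ≤ K (g + R)` almost everywhere, so the absolutely continuous function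
`exp P * R + ∫ a..·, K exp(P) g` is nondecreasing. Letting the right endpoint tend to `∞`,
where `R` vanishes and `P` stays bounded, gives
`exp (P t) * R t ≤ ∫ s in Ioi t, K s * exp (P s) * g s`, which is the claim because
`∫ u in Ioc t s, K u = P s - P t`.
-/

open MeasureTheory Set Real Filter Topology

theorem LipschitzOnWith.comp_absolutelyContinuousOnInterval {X Y : Type*} [PseudoMetricSpace X]
    [PseudoMetricSpace Y] {φ : X → Y} {L : NNReal} {s : Set X} {f : ℝ → X} {a b : ℝ}
    (hφ : LipschitzOnWith L φ s) (hf : AbsolutelyContinuousOnInterval f a b)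
    (hfs : MapsTo f (uIcc a b) s) : AbsolutelyContinuousOnInterval (φ ∘ f) a b := by
  unfold AbsolutelyContinuousOnInterval at hf ⊢
  have hL := hf.const_mul (L : ℝ)
  rw [mul_zero] at hL
  refine squeeze_zero' (.of_forall fun _ => Finset.sum_nonneg fun _ _ => dist_nonneg) ?_ hL
  filter_upwards [mem_inf_of_right (mem_principal_self _)] with E hE
  rw [Finset.mul_sum]
  exact Finset.sum_le_sum fun i hi =>
    hφ.dist_le_mul _ (hfs (hE.1 i hi).1) _ (hfs (hE.1 i hi).2)

theorem ContDiff.comp_absolutelyContinuousOnInterval {F : Type*} [NormedAddCommGroup F]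
    [NormedSpace ℝ F] {φ : ℝ → F} {f : ℝ → ℝ} {a b : ℝ} (hφ : ContDiff ℝ 1 φ)
    (hf : AbsolutelyContinuousOnInterval f a b) :
    AbsolutelyContinuousOnInterval (φ ∘ f) a b := by
  obtain ⟨C, hC⟩ := hf.exists_bound
  obtain ⟨L, hL⟩ := hφ.contDiffOn.exists_lipschitzOnWith one_ne_zero (convex_Icc (-C) C)
    isCompact_Icc
  exact hL.comp_absolutelyContinuousOnInterval hf fun x hx => abs_le.mp (hC x hx)

theorem AbsolutelyContinuousOnInterval.le_of_ae_hasDerivAt_nonneg {f f' : ℝ → ℝ} {a b : ℝ}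
    (hab : a ≤ b) (hf : AbsolutelyContinuousOnInterval f a b)
    (hf' : ∀ᵐ x, x ∈ Ioo a b → HasDerivAt f (f' x) x) (hnn : ∀ x ∈ Ioo a b, 0 ≤ f' x) :
    f a ≤ f b := by
  rw [← sub_nonneg, ← hf.integral_deriv_eq_sub, intervalIntegral.integral_of_le hab,
    integral_Ioc_eq_integral_Ioo]
  refine setIntegral_nonneg_ae measurableSet_Ioo ?_
  filter_upwards [hf'] with x hx hxI
  rw [(hx hxI).deriv]
  exact hnn x hxI

theorem tendsto_integral_Ioi_atTop_zero {E : Type*} [NormedAddCommGroup E] [NormedSpace ℝ E]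
    {h : ℝ → E} {a : ℝ} (hh : IntegrableOn h (Ioi a)) :
    Tendsto (fun u => ∫ x in Ioi u, h x) atTop (𝓝 0) := by
  have hlim := (intervalIntegral_tendsto_integral_Ioi a hh tendsto_id).const_sub
    (∫ x in Ioi a, h x)
  rw [sub_self] at hlim
  refine hlim.congr' ?_
  filter_upwards [eventually_ge_atTop a] with u hu
  rw [id, ← intervalIntegral.integral_Ioi_sub_Ioi hh hu, sub_sub_cancel]

theorem intervalIntegrable_of_integrableOn_Ioi {E : Type*} [NormedAddCommGroup E]
    {h : ℝ → E} {a b : ℝ} (hh : IntegrableOn h (Ioi a)) (hab : a ≤ b) :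
    IntervalIntegrable h volume a b :=
  (intervalIntegrable_iff_integrableOn_Ioc_of_le hab).2 (hh.mono_set Ioc_subset_Ioi_self)

theorem continuousOn_primitive_Ici {E : Type*} [NormedAddCommGroup E] [NormedSpace ℝ E]
    {h : ℝ → E} {a : ℝ} (hh : IntegrableOn h (Ioi a)) :
    ContinuousOn (fun s => ∫ x in a..s, h x) (Ici a) := by
  intro s hs
  have hI : IntegrableOn h (uIcc a (s + 1)) := by
    rw [uIcc_of_le (by linarith [mem_Ici.mp hs]), integrableOn_Icc_iff_integrableOn_Ioc]
    exact hh.mono_set Ioc_subset_Ioi_self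
  refine ((intervalIntegral.continuousOn_primitive_interval hI) s ?_).mono_of_mem_nhdsWithin ?_
  · rw [uIcc_of_le (by linarith [mem_Ici.mp hs])]
    exact ⟨hs, by linarith⟩
  · rw [uIcc_of_le (by linarith [mem_Ici.mp hs]), ← Ici_inter_Iic]
    exact inter_mem_nhdsWithin _ (Iic_mem_nhds (by linarith))

theorem IntegrableOn.mul_of_continuousOn_of_abs_le {α : Type*} [TopologicalSpace α]
    [MeasurableSpace α] [OpensMeasurableSpace α] {μ : Measure α} {K h : α → ℝ} {s : Set α}
    {M : ℝ} (hK : IntegrableOn K s μ) (hs : MeasurableSet s) (hh : ContinuousOn h s)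
    (hM : ∀ x ∈ s, |h x| ≤ M) : IntegrableOn (fun x => K x * h x) s μ :=
  hK.mul_bdd (hh.aestronglyMeasurable hs) ((ae_restrict_iff' hs).2 (.of_forall hM))

section Gronwall

variable {K f g : ℝ → ℝ} {a : ℝ}

theorem exp_primitive_mul_integral_Ioi_le (hK : IntegrableOn K (Ioi a))
    (hKnn : ∀ s ∈ Ioi a, 0 ≤ K s) (hKf : IntegrableOn (fun s => K s * f s) (Ioi a))
    (hKg : IntegrableOn (fun s => K s * exp (∫ x in a..s, K x) * g s) (Ioi a))
    (hineq : ∀ s, a ≤ s → f s ≤ g s + ∫ x in Ioi s, K x * f x) {t u : ℝ} (hat : a ≤ t)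
    (htu : t ≤ u) :
    exp (∫ x in a..t, K x) * ∫ x in Ioi t, K x * f x ≤
      exp (∫ x in a..u, K x) * (∫ x in Ioi u, K x * f x) +
        ∫ s in t..u, K s * exp (∫ x in a..s, K x) * g s := by
  set P := fun s => ∫ x in a..s, K x
  set Q := fun s => ∫ x in a..s, K x * f x
  set G := fun s => ∫ x in a..s, K x * exp (P x) * g x
  set C := ∫ x in Ioi a, K x * f x
  have hau : a ≤ u := hat.trans htu
  have hIcc : uIcc t u ⊆ uIcc a u :=
    uIcc_subset_uIcc ⟨inf_le_left.trans hat, htu.trans le_sup_right⟩ right_mem_uIcc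
  have hKu := intervalIntegrable_of_integrableOn_Ioi hK hau
  have hKfu := intervalIntegrable_of_integrableOn_Ioi hKf hau
  have hKgu := intervalIntegrable_of_integrableOn_Ioi hKg hau
  have hac : ∀ {h : ℝ → ℝ}, IntervalIntegrable h volume a u →
      AbsolutelyContinuousOnInterval (fun s => ∫ x in a..s, h x) t u :=
    fun hh => (hh.absolutelyContinuousOnInterval_intervalIntegral left_mem_uIcc).mono hIcc
  have htail : ∀ s, a ≤ s → C - Q s = ∫ x in Ioi s, K x * f x := fun s hs => by
    show (∫ x in Ioi a, K x * f x) - ∫ x in a..s, K x * f x = _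
    rw [← intervalIntegral.integral_Ioi_sub_Ioi hKf hs, sub_sub_cancel]
  set Ψ := fun s => exp (P s) * (C - Q s) + G s
  have hΨ : AbsolutelyContinuousOnInterval Ψ t u :=
    ((contDiff_exp.comp_absolutelyContinuousOnInterval (hac hKu)).mul
      ((contDiff_const.sub contDiff_id).comp_absolutelyContinuousOnInterval (hac hKfu))).add
      (hac hKgu)
  have hΨ' : ∀ᵐ x, x ∈ Ioo t u →
      HasDerivAt Ψ (K x * exp (P x) * (g x + (C - Q x) - f x)) x := by
    filter_upwards [hKu.ae_hasDerivAt_integral, hKfu.ae_hasDerivAt_integral,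
      hKgu.ae_hasDerivAt_integral] with x hP hQ hG hx
    have hxu : x ∈ uIcc a u := hIcc (Ioo_subset_Icc_self.trans Icc_subset_uIcc hx)
    exact ((((hP hxu a left_mem_uIcc).exp).mul ((hQ hxu a left_mem_uIcc).const_sub C)).add
      (hG hxu a left_mem_uIcc)).congr_deriv (by ring)
  have hΨnn : ∀ x ∈ Ioo t u, 0 ≤ K x * exp (P x) * (g x + (C - Q x) - f x) := by
    intro x hx
    have hax : a < x := hat.trans_lt hx.1
    have := hineq x hax.le
    rw [← htail x hax.le] at this
    exact mul_nonneg (mul_nonneg (hKnn x hax) (exp_pos _).le) (by linarith)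
  have hmono := hΨ.le_of_ae_hasDerivAt_nonneg htu hΨ' hΨnn
  have hG : G u - G t = ∫ s in t..u, K s * exp (P s) * g s :=
    intervalIntegral.integral_interval_sub_left hKgu
      (intervalIntegrable_of_integrableOn_Ioi hKg hat)
  simp only [Ψ, htail t hat, htail u hau] at hmono
  linarith

theorem exp_primitive_mul_integral_Ioi_le_integral (hK : IntegrableOn K (Ioi a))
    (hKnn : ∀ s ∈ Ioi a, 0 ≤ K s) (hKf : IntegrableOn (fun s => K s * f s) (Ioi a))
    (hKg : IntegrableOn (fun s => K s * exp (∫ x in a..s, K x) * g s) (Ioi a))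
    (hineq : ∀ s, a ≤ s → f s ≤ g s + ∫ x in Ioi s, K x * f x) {t : ℝ} (hat : a ≤ t) :
    exp (∫ x in a..t, K x) * ∫ x in Ioi t, K x * f x ≤
      ∫ s in Ioi t, K s * exp (∫ x in a..s, K x) * g s := by
  have hlim : Tendsto (fun u => exp (∫ x in a..u, K x) * (∫ x in Ioi u, K x * f x) +
      ∫ s in t..u, K s * exp (∫ x in a..s, K x) * g s) atTop
      (𝓝 (exp (∫ x in Ioi a, K x) * 0 + ∫ s in Ioi t, K s * exp (∫ x in a..s, K x) * g s)) :=
    (((intervalIntegral_tendsto_integral_Ioi a hK tendsto_id).rexp).mul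
      (tendsto_integral_Ioi_atTop_zero hKf)).add
      (intervalIntegral_tendsto_integral_Ioi t (hKg.mono_set (Ioi_subset_Ioi hat)) tendsto_id)
  rw [mul_zero, zero_add] at hlim
  exact ge_of_tendsto hlim ((eventually_ge_atTop t).mono fun u htu =>
    exp_primitive_mul_integral_Ioi_le hK hKnn hKf hKg hineq hat htu)

theorem le_add_integral_mul_exp_of_le_add_integral (hK : IntegrableOn K (Ioi a))
    (hKnn : ∀ s ∈ Ioi a, 0 ≤ K s) (hKf : IntegrableOn (fun s => K s * f s) (Ioi a))
    (hKg : IntegrableOn (fun s => K s * g s) (Ioi a))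
    (hineq : ∀ s, a ≤ s → f s ≤ g s + ∫ x in Ioi s, K x * f x) {t : ℝ} (hat : a ≤ t) :
    f t ≤ g t + ∫ s in Ioi t, K s * exp (∫ u in Ioc t s, K u) * g s := by
  set P := fun s => ∫ x in a..s, K x
  have hPle : ∀ s ∈ Ioi a, ‖exp (P s)‖ ≤ exp (∫ x in Ioi a, K x) := fun s hs => by
    have htail : 0 ≤ ∫ x in Ioi s, K x :=
      setIntegral_nonneg measurableSet_Ioi fun x hx => hKnn x (mem_Ioi.2 (lt_trans hs hx))
    rw [norm_of_nonneg (exp_pos _).le, exp_le_exp,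
      ← intervalIntegral.integral_interval_add_Ioi hK (hK.mono_set (Ioi_subset_Ioi hs.le))]
    linarith
  have hKg' : IntegrableOn (fun s => K s * exp (P s) * g s) (Ioi a) :=
    IntegrableOn.congr_fun (hKg.mul_bdd (((continuousOn_primitive_Ici hK).rexp.mono
      Ioi_subset_Ici_self).aestronglyMeasurable measurableSet_Ioi)
      ((ae_restrict_iff' measurableSet_Ioi).2 (.of_forall hPle))) (fun s _ => by ring)
      measurableSet_Ioi
  have hP : ∀ s, t ≤ s → ∫ u in Ioc t s, K u = P s - P t := fun s hts => by
    rw [← intervalIntegral.integral_of_le hts,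
      intervalIntegral.integral_interval_sub_left
        (intervalIntegrable_of_integrableOn_Ioi hK (hat.trans hts))
        (intervalIntegrable_of_integrableOn_Ioi hK hat)]
  calc f t ≤ g t + ∫ x in Ioi t, K x * f x := hineq t hat
    _ ≤ g t + exp (-P t) * ∫ s in Ioi t, K s * exp (P s) * g s := by
      gcongr
      rw [exp_neg, inv_mul_eq_div, le_div_iff₀ (exp_pos _), mul_comm]
      exact exp_primitive_mul_integral_Ioi_le_integral hK hKnn hKf hKg' hineq hat
    _ = g t + ∫ s in Ioi t, K s * exp (∫ u in Ioc t s, K u) * g s := by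
      rw [← integral_const_mul]
      congr 1
      refine setIntegral_congr_fun measurableSet_Ioi fun s hs => ?_
      rw [hP s (le_of_lt hs), exp_sub, exp_neg]
      field_simp

end Gronwall

/-- Gronwall's lemma on an unbounded interval. -/
theorem gronwall_unbounded (a : ℝ) (K f g : ℝ → ℝ)
    (hKpos : ∀ t ∈ Ioi a, 0 < K t)
    (hKint : IntegrableOn K (Ioi a))
    (hfcont : ContinuousOn f (Ici a)) (hfbdd : ∃ M, ∀ t ∈ Ici a, f t ≤ M)
    (hfnn : ∀ t ∈ Ici a, 0 ≤ f t)
    (hgcont : ContinuousOn g (Ici a)) (hgbdd : ∃ M, ∀ t ∈ Ici a, g t ≤ M)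
    (hgnn : ∀ t ∈ Ici a, 0 ≤ g t)
    (hineq : ∀ t, a ≤ t → f t ≤ g t + ∫ s in Ioi t, K s * f s) :
    ∀ t, a ≤ t →
      f t ≤ g t + ∫ s in Ioi t, K s * Real.exp (∫ u in Ioc t s, K u) * g s := by
  obtain ⟨Mf, hMf⟩ := hfbdd
  obtain ⟨Mg, hMg⟩ := hgbdd
  have hKf : IntegrableOn (fun s => K s * f s) (Ioi a) :=
    IntegrableOn.mul_of_continuousOn_of_abs_le hKint measurableSet_Ioi
      (hfcont.mono Ioi_subset_Ici_self)
      fun s hs => (abs_of_nonneg (hfnn s (Ioi_subset_Ici_self hs))).trans_le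
        (hMf s (Ioi_subset_Ici_self hs))
  have hKg : IntegrableOn (fun s => K s * g s) (Ioi a) :=
    IntegrableOn.mul_of_continuousOn_of_abs_le hKint measurableSet_Ioi
      (hgcont.mono Ioi_subset_Ici_self)
      fun s hs => (abs_of_nonneg (hgnn s (Ioi_subset_Ici_self hs))).trans_le
        (hMg s (Ioi_subset_Ici_self hs))
  exact fun t hat => le_add_integral_mul_exp_of_le_add_integral hKint
    (fun s hs => (hKpos s hs).le) hKf hKg hineq hat
end

section
/- Let F be continuous on the ray {z + r : r ≥ 0} ⊂ ℂ with ∫₀^∞ |F(z+r)| dr < ∞, and let w, W be continuous bounded functions on this ray both satisfying the integral equation u(z') = w₀(z') + ∫_{z'}^∞ sin(t − z') F(t) u(t) dt (integration along t = z' + r, r ≥ 0) for all z' on the ray, where w₀ is a fixed continuous function. Then w ≡ W on the ray. -/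
/-!
Subtracting the two integral equations and using `‖sin r‖ ≤ 1`, the difference
`v = ‖w - W‖` along the ray satisfies `v r ≤ ∫_{t > r} f t * v t` with `f = ‖F‖` integrable.
Such a `v` vanishes: if on `[a, ∞)` it is supported in a set of `f`-mass at most `1/2`, its
supremum `S` there satisfies `S ≤ S / 2`. This applies to a tail `[b, ∞)`, and the infimum `c`
of the points beyond which `v` vanishes cannot be positive, since a short interval to the left
of `c` has small `f`-mass as well.
-/

open MeasureTheory Set Filter Topology

section Shift

variable {E : Type*} [NormedAddCommGroup E]

lemma integrableOn_Ioi_comp_add_left_iff (g : ℝ → E) (c : ℝ) :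
    IntegrableOn (fun r => g (c + r)) (Ioi 0) ↔ IntegrableOn g (Ioi c) := by
  simpa [Function.comp_def, preimage_const_add_Ioi] using
    (measurePreserving_add_left volume c).integrableOn_comp_preimage
      (measurableEmbedding_addLeft c) (f := g) (s := Ioi c)

lemma integral_Ioi_comp_add_left [NormedSpace ℝ E] (g : ℝ → E) (c : ℝ) :
    ∫ r in Ioi 0, g (c + r) = ∫ t in Ioi c, g t := by
  simpa [preimage_const_add_Ioi] using
    (measurePreserving_add_left volume c).setIntegral_preimage_emb
      (measurableEmbedding_addLeft c) g (Ioi c)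

end Shift

section Volterra

variable {𝕜 : Type*} [RCLike 𝕜]

lemma integrableOn_Ioi_mul_of_bounded {g u : ℝ → 𝕜} (hg : IntegrableOn g (Ioi 0))
    (hu : ContinuousOn u (Ici 0)) (hbdd : ∃ M, ∀ r, 0 ≤ r → ‖u r‖ ≤ M) :
    IntegrableOn (fun t => g t * u t) (Ioi 0) := by
  obtain ⟨M, hM⟩ := hbdd
  simp_rw [mul_comm (g _)]
  exact hg.bdd_mul ((hu.mono Ioi_subset_Ici_self).aestronglyMeasurable measurableSet_Ioi)
    ((ae_restrict_iff' measurableSet_Ioi).2 (ae_of_all _ fun r hr => hM r (le_of_lt hr)))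

lemma norm_sub_le_setIntegral_of_volterra {K g h u U : ℝ → 𝕜} (hK : Continuous K)
    (hK1 : ∀ r, ‖K r‖ ≤ 1) (hgu : IntegrableOn (fun t => g t * u t) (Ioi 0))
    (hgU : IntegrableOn (fun t => g t * U t) (Ioi 0))
    (hu : ∀ r₀, 0 ≤ r₀ → u r₀ = h r₀ + ∫ r in Ioi 0, K r * g (r₀ + r) * u (r₀ + r))
    (hU : ∀ r₀, 0 ≤ r₀ → U r₀ = h r₀ + ∫ r in Ioi 0, K r * g (r₀ + r) * U (r₀ + r)) :
    ∀ r₀, 0 ≤ r₀ → ‖u r₀ - U r₀‖ ≤ ∫ t in Ioi r₀, ‖g t‖ * ‖u t - U t‖ := by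
  intro r₀ hr₀
  have hshift : ∀ {φ : ℝ → 𝕜}, IntegrableOn (fun t => g t * φ t) (Ioi 0) →
      IntegrableOn (fun r => g (r₀ + r) * φ (r₀ + r)) (Ioi 0) := fun {φ} hφ =>
    (integrableOn_Ioi_comp_add_left_iff (fun t => g t * φ t) r₀).2
      (hφ.mono_set (Ioi_subset_Ioi hr₀))
  have hkernel : ∀ {φ : ℝ → 𝕜}, IntegrableOn (fun t => g t * φ t) (Ioi 0) →
      IntegrableOn (fun r => K r * g (r₀ + r) * φ (r₀ + r)) (Ioi 0) := fun hφ => by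
    simp_rw [mul_assoc]
    exact (hshift hφ).bdd_mul hK.aestronglyMeasurable (ae_of_all _ hK1)
  have hdiff : IntegrableOn (fun t => g t * (u t - U t)) (Ioi 0) :=
    (hgu.sub hgU).congr_fun (fun t _ => (mul_sub ..).symm) measurableSet_Ioi
  calc ‖u r₀ - U r₀‖
      = ‖∫ r in Ioi 0, K r * g (r₀ + r) * (u (r₀ + r) - U (r₀ + r))‖ := by
        rw [hu r₀ hr₀, hU r₀ hr₀, add_sub_add_left_eq_sub,
          ← integral_sub (hkernel hgu) (hkernel hgU)]
        simp_rw [mul_sub]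
    _ ≤ ∫ r in Ioi 0, ‖g (r₀ + r)‖ * ‖u (r₀ + r) - U (r₀ + r)‖ := by
        refine norm_integral_le_of_norm_le (by simpa only [norm_mul] using (hshift hdiff).norm)
          (ae_of_all _ fun r => ?_)
        rw [norm_mul, norm_mul]
        exact mul_le_mul_of_nonneg_right
          (mul_le_of_le_one_left (norm_nonneg _) (hK1 r)) (norm_nonneg _)
    _ = ∫ t in Ioi r₀, ‖g t‖ * ‖u t - U t‖ :=
        integral_Ioi_comp_add_left (fun t => ‖g t‖ * ‖u t - U t‖) r₀

end Volterra

lemma exists_setIntegral_Ioi_le {f : ℝ → ℝ} (a : ℝ) {ε : ℝ} (hε : 0 < ε) :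
    ∃ b, a ≤ b ∧ ∫ t in Ioi b, f t ≤ ε :=
  (((tendsto_integral_Ioi_zero tendsto_id).eventually (eventually_le_nhds hε)).and
    (eventually_ge_atTop a)).exists.imp fun _ hb => ⟨hb.2, hb.1⟩

lemma exists_setIntegral_Ioc_le {f : ℝ → ℝ} {a c : ℝ} (hf : IntegrableOn f (Ioi a))
    (hac : a < c) {ε : ℝ} (hε : 0 < ε) : ∃ b ∈ Ico a c, ∫ t in Ioc b c, f t ≤ ε := by
  obtain ⟨δ, hδ, hG⟩ := Metric.continuousWithinAt_iff.1
    (hf.continuousOn_Ici_primitive_Ioi c hac.le) ε hε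
  set b := max a (c - δ / 2)
  have hbc : b < c := max_lt hac (by linarith)
  have hb : b ∈ Ici a := le_max_left a _
  refine ⟨b, ⟨hb, hbc⟩, ?_⟩
  have hdist : dist b c < δ := by
    rw [Real.dist_eq, abs_of_neg (by linarith)]
    linarith [le_max_right a (c - δ / 2)]
  rw [← intervalIntegral.integral_of_le hbc.le,
    ← intervalIntegral.integral_Ioi_sub_Ioi (hf.mono_set (Ioi_subset_Ioi hb)) hbc.le]
  exact (le_abs_self _).trans (hG hb hdist).le

section Gronwall

variable {f v : ℝ → ℝ}

lemma eqOn_zero_of_le_setIntegral_of_setIntegral_le_half (hf : 0 ≤ f) (hv : 0 ≤ v)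
    (hfi : IntegrableOn f (Ioi 0)) (hfv : IntegrableOn (fun t => f t * v t) (Ioi 0))
    (hle : ∀ r, 0 ≤ r → v r ≤ ∫ t in Ioi r, f t * v t)
    {a : ℝ} (ha : 0 ≤ a) {s : Set ℝ} (hs : MeasurableSet s) (hsa : s ⊆ Ioi a)
    (hvs : ∀ t ∈ Ioi a \ s, v t = 0) (hfs : ∫ t in s, f t ≤ 1 / 2) :
    EqOn v 0 (Ici a) := by
  have hbdd : BddAbove (v '' Ici a) := by
    refine ⟨∫ t in Ioi 0, f t * v t, forall_mem_image.2 fun r hr => (hle r (ha.trans hr)).trans ?_⟩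
    exact setIntegral_mono_set hfv (ae_of_all _ fun t => mul_nonneg (hf t) (hv t))
      (Ioi_subset_Ioi (ha.trans hr)).eventuallyLE
  set S := sSup (v '' Ici a)
  have hvS : ∀ r ∈ Ici a, v r ≤ S := fun r hr => le_csSup hbdd (mem_image_of_mem v hr)
  have hS : 0 ≤ S := (hv a).trans (hvS a self_mem_Ici)
  have hfva : IntegrableOn (fun t => f t * v t) (Ioi a) := hfv.mono_set (Ioi_subset_Ioi ha)
  have hhalf : ∀ r ∈ Ici a, v r ≤ S / 2 := fun r hr => calc
    v r ≤ ∫ t in Ioi r, f t * v t := hle r (ha.trans hr)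
    _ ≤ ∫ t in Ioi a, f t * v t := setIntegral_mono_set hfva
        (ae_of_all _ fun t => mul_nonneg (hf t) (hv t)) (Ioi_subset_Ioi hr).eventuallyLE
    _ = ∫ t in s, f t * v t := setIntegral_eq_of_subset_of_forall_sdiff_eq_zero
        measurableSet_Ioi hsa fun t ht => by rw [hvs t ht, mul_zero]
    _ ≤ ∫ t in s, f t * S := setIntegral_mono_on (hfva.mono_set hsa)
        ((hfi.mono_set (hsa.trans (Ioi_subset_Ioi ha))).mul_const S) hs
        fun t ht => mul_le_mul_of_nonneg_left (hvS t (mem_Ioi.1 (hsa ht)).le) (hf t)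
    _ = (∫ t in s, f t) * S := integral_mul_const S f
    _ ≤ S / 2 := by nlinarith
  have hS0 : S ≤ 0 := by
    linarith [csSup_le (nonempty_Ici.image v) (forall_mem_image.2 hhalf)]
  exact fun r hr => le_antisymm ((hvS r hr).trans hS0) (hv r)

theorem eqOn_zero_of_le_setIntegral_Ioi (hf : 0 ≤ f) (hv : 0 ≤ v)
    (hfi : IntegrableOn f (Ioi 0)) (hfv : IntegrableOn (fun t => f t * v t) (Ioi 0))
    (hle : ∀ r, 0 ≤ r → v r ≤ ∫ t in Ioi r, f t * v t) :
    EqOn v 0 (Ici 0) := by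
  set A := {a | 0 ≤ a ∧ EqOn v 0 (Ici a)}
  obtain ⟨b, hb, hfb⟩ := exists_setIntegral_Ioi_le (f := f) 0 one_half_pos
  have hbA : b ∈ A := ⟨hb, eqOn_zero_of_le_setIntegral_of_setIntegral_le_half hf hv hfi hfv hle
    hb measurableSet_Ioi subset_rfl (by simp) hfb⟩
  set c := sInf A
  have hc : 0 ≤ c := le_csInf ⟨b, hbA⟩ fun a ha => ha.1
  have hvc : EqOn v 0 (Ioi c) := fun r hr => by
    obtain ⟨a, ha, har⟩ := exists_lt_of_csInf_lt ⟨b, hbA⟩ hr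
    exact ha.2 har.le
  have hcA : c ∈ A := by
    refine ⟨hc, fun r hr => ?_⟩
    rcases (mem_Ici.1 hr).eq_or_lt with rfl | hr
    · refine le_antisymm ((hle _ hc).trans_eq (setIntegral_eq_zero_of_forall_eq_zero ?_)) (hv _)
      exact fun t ht => by simp [hvc ht]
    · exact hvc hr
  suffices c = 0 from this ▸ hcA.2
  by_contra hc0
  obtain ⟨a, ⟨ha, hac⟩, hfa⟩ := exists_setIntegral_Ioc_le hfi (hc.lt_of_ne' hc0) one_half_pos
  have haA : a ∈ A := ⟨ha, eqOn_zero_of_le_setIntegral_of_setIntegral_le_half hf hv hfi hfv hle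
    ha measurableSet_Ioc Ioc_subset_Ioi_self
    (fun t ht => hvc (not_le.1 fun htc => ht.2 ⟨ht.1, htc⟩)) hfa⟩
  exact (csInf_le ⟨0, fun a ha => ha.1⟩ haA).not_gt hac

end Gronwall

/-- Uniqueness of bounded continuous solutions of the singular Volterra
integral equation along a horizontal ray. -/
theorem volterra_uniqueness (z : ℂ) (F w W w₀ : ℂ → ℂ)
    (hFcont : ContinuousOn (fun r : ℝ => F (z + r)) (Ici 0))
    (hFint : IntegrableOn (fun r : ℝ => ‖F (z + r)‖) (Ioi 0))
    (hwcont : ContinuousOn (fun r : ℝ => w (z + r)) (Ici 0))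
    (hWcont : ContinuousOn (fun r : ℝ => W (z + r)) (Ici 0))
    (hwbdd : ∃ M, ∀ r : ℝ, 0 ≤ r → ‖w (z + r)‖ ≤ M)
    (hWbdd : ∃ M, ∀ r : ℝ, 0 ≤ r → ‖W (z + r)‖ ≤ M)
    (hw : ∀ r₀ : ℝ, 0 ≤ r₀ → w (z + r₀) = w₀ (z + r₀)
      + ∫ r in Ioi (0 : ℝ), Complex.sin r * F (z + r₀ + r) * w (z + r₀ + r))
    (hW : ∀ r₀ : ℝ, 0 ≤ r₀ → W (z + r₀) = w₀ (z + r₀)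
      + ∫ r in Ioi (0 : ℝ), Complex.sin r * F (z + r₀ + r) * W (z + r₀ + r)) :
    ∀ r : ℝ, 0 ≤ r → w (z + r) = W (z + r) := by
  have hsin : ∀ r : ℝ, ‖Complex.sin r‖ ≤ 1 := fun r => by
    rw [← Complex.ofReal_sin, Complex.norm_real, Real.norm_eq_abs]
    exact Real.abs_sin_le_one r
  have hg : IntegrableOn (fun r : ℝ => F (z + r)) (Ioi 0) :=
    (integrable_norm_iff ((hFcont.mono Ioi_subset_Ici_self).aestronglyMeasurable
      measurableSet_Ioi)).1 hFint
  have hgw := integrableOn_Ioi_mul_of_bounded hg hwcont hwbdd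
  have hgW := integrableOn_Ioi_mul_of_bounded hg hWcont hWbdd
  have hgv : IntegrableOn (fun t : ℝ => ‖F (z + t)‖ * ‖w (z + t) - W (z + t)‖) (Ioi 0) :=
    IntegrableOn.congr_fun (hgw.sub hgW).norm (fun t _ => by simp [← mul_sub]) measurableSet_Ioi
  have hvolterra := norm_sub_le_setIntegral_of_volterra (K := fun r : ℝ => Complex.sin r)
    (by fun_prop) hsin hgw hgW
    (fun r₀ hr₀ => by simpa only [Complex.ofReal_add, add_assoc] using hw r₀ hr₀)
    (fun r₀ hr₀ => by simpa only [Complex.ofReal_add, add_assoc] using hW r₀ hr₀)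
  have hvanish := eqOn_zero_of_le_setIntegral_Ioi (fun _ => norm_nonneg _)
    (fun _ => norm_nonneg _) hFint hgv hvolterra
  exact fun r hr => sub_eq_zero.1 (norm_eq_zero.1 (hvanish hr))
end
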